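/- Fix integers m, n, N, β ≥ 1. Let v_1, …, v_N ∈ ℂ^{mn}, not all zero, set C_i := vec^{−1}(v_i) ∈ ℂ^{n×m}, Y_{ij} := v_i v_j*, with induced product (A⋆B)_{ij} := tr((A⊗B) Y_{ij}*), and let 𝐫 := max{ rk X : X ∈ span_ℂ{C_1, …, C_N} } and r₀ := min(β, m, n, 𝐫). Then there exist A ∈ ℂ^{m×β} and B ∈ ℂ^{n×β} with rk(AA*) = rk(BB*) = r₀ (hence min(rk AA*, rk BB*, 𝐫) = r₀) and a vector u ∈ ℂ^N such that u*(AA* ⋆ BB*)u = r₀ and (1/r₀)·|ρ* u|² = r₀, where ρ ∈ ℂ^N has entries ρ_i := v_i* vec(BA^T). In particular, the coefficient 1/min(rk AA*, rk BB*, 𝐫) in the lower bound AA* ⋆ BB* ≽ (1/min(rk AA*, rk BB*, 𝐫)) ρρ* cannot be replaced by any larger constant uniformly over all A, B. -/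

import Mathlib

/-!
Take X = ∑ uᵢ Cᵢ of maximal rank in the span, so that ∑ uᵢ vᵢ = vec X. Since
`(A ⊗ B) vec X = vec (B X Aᵀ)`, both `u*(AA* ⋆ BB*)u` and `ρ* u` depend on `A, B` only through
`G = B* X Ā`: the first is `tr (G* G)` and the second is `tr G`. As `rk X ≥ r₀`, there are
`P, Q` with `P X Q = 1` (size `r₀`); padding `Q` and `P*` with zero columns to width `β` gives
`A, B` of rank `r₀` with `G` the diagonal projection of rank `r₀`, so both traces equal `r₀`.
-/

open Matrix Kronecker ComplexOrder

namespace Matrix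

variable {ι κ m n o : Type*} [Fintype m]

section Field

variable {K : Type*} [Field K] {r : ℕ}

theorem exists_mem_rank_eq_sSup [DecidableEq m] (S : Submodule K (Matrix n m K)) :
    ∃ X ∈ S, X.rank = sSup {t : ℕ | ∃ X ∈ S, X.rank = t} :=
  Nat.sSup_mem (s := {t : ℕ | ∃ X ∈ S, X.rank = t}) ⟨0, 0, S.zero_mem, rank_zero⟩
    ⟨Fintype.card m, by rintro _ ⟨X, -, rfl⟩; exact X.rank_le_card_width⟩

variable [Fintype n]

theorem exists_mul_mul_eq_one_of_le_rank [DecidableEq m] [DecidableEq n] (X : Matrix n m K)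
    (hr : r ≤ X.rank) : ∃ (P : Matrix (Fin r) n K) (Q : Matrix m (Fin r) K), P * X * Q = 1 := by
  obtain ⟨b, hb⟩ := exists_linearIndependent_of_le_finrank hr
  choose y hy using fun k => (b k).2
  let T := Fintype.linearCombination K fun k => (b k : n → K)
  have hT : LinearMap.ker T = ⊥ := LinearMap.ker_eq_bot.mpr
    (hb.map' _ (Submodule.ker_subtype _)).fintypeLinearCombination_injective
  obtain ⟨g, hg⟩ := T.exists_leftInverse_of_injective hT
  have hXy : X.mulVecLin ∘ₗ Fintype.linearCombination K y = T := by
    refine LinearMap.ext fun c => ?_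
    simp [T, Fintype.linearCombination_apply, ← hy]
  refine ⟨LinearMap.toMatrix' g, LinearMap.toMatrix' (Fintype.linearCombination K y), ?_⟩
  rw [← LinearMap.toMatrix'_toLin' X, ← LinearMap.toMatrix'_comp, ← LinearMap.toMatrix'_comp,
    Matrix.toLin'_apply', LinearMap.comp_assoc, hXy, hg, LinearMap.toMatrix'_id]

theorem le_rank_of_mul_mul_eq_one {L : Matrix (Fin r) m K} {M : Matrix m n K}
    {N : Matrix n (Fin r) K} (h : L * M * N = 1) : r ≤ M.rank :=
  calc r = (L * M * N).rank := by rw [h, rank_one, Fintype.card_fin]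
    _ ≤ (L * M).rank := rank_mul_le_left _ _
    _ ≤ M.rank := rank_mul_le_right _ _

theorem rank_mul_eq_of_mul_mul_eq_one [Fintype o] {L : Matrix (Fin r) m K}
    {M : Matrix m (Fin r) K} {J : Matrix (Fin r) o K} {N : Matrix o (Fin r) K}
    (h : L * (M * J) * N = 1) : (M * J).rank = r :=
  le_antisymm ((rank_mul_le_right _ _).trans (J.rank_le_card_height.trans_eq (Fintype.card_fin r)))
    (le_rank_of_mul_mul_eq_one h)

end Field

section StarRing

variable [Fintype n] {R : Type*} [CommRing R] [StarRing R]

theorem trace_mul_conjTranspose_vecMulVec [Fintype κ] (K : Matrix κ κ R) (x y : κ → R) :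
    trace (K * (vecMulVec x (star y))ᴴ) = star x ⬝ᵥ (K *ᵥ y) := by
  rw [conjTranspose_vecMulVec, star_star, mul_vecMulVec, trace_vecMulVec, dotProduct_comm]

theorem star_dotProduct_of_trace_mul_vecMulVec_mulVec [Fintype ι] [Fintype κ] (K : Matrix κ κ R)
    (v : ι → κ → R) (u : ι → R) :
    star u ⬝ᵥ (of (fun i j => trace (K * (vecMulVec (v i) (star (v j)))ᴴ)) *ᵥ u)
      = star (∑ i, u i • v i) ⬝ᵥ (K *ᵥ ∑ i, u i • v i) := by
  simp only [star_sum, star_smul, mulVec_sum, mulVec_smul, sum_dotProduct, dotProduct_sum,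
    smul_dotProduct, dotProduct_smul, smul_eq_mul]
  simp only [dotProduct, mulVec, of_apply, Pi.star_apply, trace_mul_conjTranspose_vecMulVec,
    Finset.mul_sum, Finset.sum_mul]
  rw [Finset.sum_comm]
  ac_rfl

theorem star_dotProduct_eq_star_dotProduct_sum [Fintype ι] [Fintype κ] (v : ι → κ → R)
    (y : κ → R) (u : ι → R) :
    (star fun i => star (v i) ⬝ᵥ y) ⬝ᵥ u = star y ⬝ᵥ ∑ i, u i • v i := by
  simp only [dotProduct_sum, dotProduct_smul, smul_eq_mul]
  simp only [dotProduct, Pi.star_apply, star_sum, star_mul', star_star, Finset.sum_mul,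
    Finset.mul_sum]
  exact Finset.sum_congr rfl fun i _ => Finset.sum_congr rfl fun j _ => by ring

theorem star_vec_dotProduct_kronecker_mulVec_vec [Fintype o] (A : Matrix m o R)
    (B : Matrix n o R) (X : Matrix n m R) :
    star (vec X) ⬝ᵥ (((A * Aᴴ) ⊗ₖ (B * Bᴴ)) *ᵥ vec X)
      = trace ((Bᴴ * X * A.map star)ᴴ * (Bᴴ * X * A.map star)) := by
  have hgram : ∀ (M : Matrix (m × n) (o × o) R) (w : m × n → R),
      star w ⬝ᵥ ((M * Mᴴ) *ᵥ w) = star (Mᴴ *ᵥ w) ⬝ᵥ (Mᴴ *ᵥ w) := fun M w => by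
    rw [star_mulVec, conjTranspose_conjTranspose, ← dotProduct_mulVec, mulVec_mulVec]
  rw [mul_kronecker_mul, ← conjTranspose_kronecker, hgram, conjTranspose_kronecker,
    kronecker_mulVec_vec, star_vec_dotProduct_vec]
  rfl

theorem star_vec_dotProduct_vec_mul_transpose [Fintype o] (A : Matrix m o R) (B : Matrix n o R)
    (X : Matrix n m R) : star (vec (B * Aᵀ)) ⬝ᵥ vec X = trace (Bᴴ * X * A.map star) := by
  rw [star_vec_dotProduct_vec, conjTranspose_mul, transpose_conjTranspose,
    trace_mul_comm (Bᴴ * X), Matrix.mul_assoc]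

theorem submatrix_one_mul_conjTranspose_self [DecidableEq ι] [DecidableEq κ] [Fintype κ]
    {e : ι → κ} (he : Function.Injective e) :
    (1 : Matrix κ κ R).submatrix e id * ((1 : Matrix κ κ R).submatrix e id)ᴴ = 1 := by
  rw [conjTranspose_submatrix, conjTranspose_one, ← submatrix_mul _ _ _ _ _ Function.bijective_id,
    Matrix.one_mul, submatrix_one _ he]

variable [Fintype o] {r : ℕ} {J : Matrix (Fin r) o R}

theorem trace_conjTranspose_mul_self_of_mul_conjTranspose_eq_one (hJ : J * Jᴴ = 1) :
    trace (Jᴴ * J) = r := by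
  rw [trace_mul_comm, hJ, trace_one, Fintype.card_fin]

theorem isIdempotentElem_conjTranspose_mul_self (hJ : J * Jᴴ = 1) :
    IsIdempotentElem (Jᴴ * J) := by
  rw [IsIdempotentElem, Matrix.mul_assoc, ← Matrix.mul_assoc J, hJ, Matrix.one_mul]

end StarRing

variable [Fintype n] {𝕜 : Type*} [RCLike 𝕜]

theorem rank_map_star (M : Matrix m n 𝕜) : (M.map star).rank = M.rank := by
  rw [← conjTranspose_transpose, rank_transpose, rank_conjTranspose]

theorem exists_rank_eq_conjTranspose_mul_mul_map_star_eq [DecidableEq m] [DecidableEq n]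
    [Fintype o] {X : Matrix n m 𝕜} {r : ℕ} (hr : r ≤ X.rank) {J : Matrix (Fin r) o 𝕜}
    (hJ : J * Jᴴ = 1) :
    ∃ (A : Matrix m o 𝕜) (B : Matrix n o 𝕜),
      A.rank = r ∧ B.rank = r ∧ Bᴴ * X * A.map star = Jᴴ * J := by
  obtain ⟨P, Q, hPXQ⟩ := X.exists_mul_mul_eq_one_of_le_rank hr
  refine ⟨(Q * J).map star, Pᴴ * J, ?_, ?_, ?_⟩
  · rw [rank_map_star]
    refine rank_mul_eq_of_mul_mul_eq_one (L := P * X) (N := Jᴴ) ?_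
    rw [← Matrix.mul_assoc, Matrix.mul_assoc _ J, hPXQ, Matrix.one_mul, hJ]
  · refine rank_mul_eq_of_mul_mul_eq_one (L := Qᴴ * Xᴴ) (N := Jᴴ) ?_
    rw [← Matrix.mul_assoc, Matrix.mul_assoc _ J, Matrix.mul_assoc Qᴴ, ← conjTranspose_mul,
      ← conjTranspose_mul, hPXQ, conjTranspose_one, Matrix.one_mul, hJ]
  · rw [Matrix.map_map, star_involutive.comp_self, Matrix.map_id, conjTranspose_mul,
      conjTranspose_conjTranspose]
    calc Jᴴ * P * X * (Q * J) = Jᴴ * (P * X * Q) * J := by simp only [Matrix.mul_assoc]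
      _ = Jᴴ * J := by rw [hPXQ, Matrix.mul_one]

end Matrix

theorem general_prod_sharp_general (m n N β : ℕ)
    (v : Fin N → Fin m × Fin n → ℂ)
    (C : Fin N → Matrix (Fin n) (Fin m) ℂ) (hC : ∀ i p q, C i p q = v i (q, p))
    (rstar : ℕ)
    (hrstar : rstar =
      sSup {t : ℕ | ∃ X ∈ Submodule.span ℂ (Set.range C), Matrix.rank X = t})
    (r₀ : ℕ) (hr₀ : r₀ = min β (min m (min n rstar))) :
    ∃ (A : Matrix (Fin m) (Fin β) ℂ) (B : Matrix (Fin n) (Fin β) ℂ) (u : Fin N → ℂ),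
      (A * Aᴴ).rank = r₀ ∧ (B * Bᴴ).rank = r₀ ∧
      min (min (A * Aᴴ).rank (B * Bᴴ).rank) rstar = r₀ ∧
      star u ⬝ᵥ ((Matrix.of fun i j : Fin N =>
          Matrix.trace (((A * Aᴴ) ⊗ₖ (B * Bᴴ)) *
            (vecMulVec (v i) (star (v j)))ᴴ)).mulVec u) = (r₀ : ℂ) ∧
      ((r₀ : ℂ))⁻¹ *
          ((‖(star fun i : Fin N =>
                star (v i) ⬝ᵥ (fun p : Fin m × Fin n => (B * Aᵀ) p.2 p.1)) ⬝ᵥ u‖ ^ 2 : ℝ) : ℂ)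
        = (r₀ : ℂ) := by
  obtain ⟨X, hXspan, hXrank⟩ := exists_mem_rank_eq_sSup (Submodule.span ℂ (Set.range C))
  obtain ⟨u, rfl⟩ := (Submodule.mem_span_range_iff_exists_fun ℂ).mp hXspan
  have hvec : vec (∑ i, u i • C i) = ∑ i, u i • v i := by
    simp only [vec_sum, vec_smul]
    congr! with i
    exact funext fun p => hC i p.2 p.1
  have hr₀β : r₀ ≤ β := by omega
  have hrank : r₀ ≤ (∑ i, u i • C i).rank := by omega
  have hJ := submatrix_one_mul_conjTranspose_self (R := ℂ) (Fin.castLE_injective hr₀β)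
  obtain ⟨A, B, hA, hB, hBXA⟩ := exists_rank_eq_conjTranspose_mul_mul_map_star_eq hrank hJ
  refine ⟨A, B, u, by rw [rank_self_mul_conjTranspose, hA], by rw [rank_self_mul_conjTranspose, hB],
    by simp only [rank_self_mul_conjTranspose, hA, hB]; omega, ?_, ?_⟩
  · rw [star_dotProduct_of_trace_mul_vecMulVec_mulVec, ← hvec,
      star_vec_dotProduct_kronecker_mulVec_vec, hBXA, (isHermitian_conjTranspose_mul_self _).eq,
      (isIdempotentElem_conjTranspose_mul_self hJ).eq,
      trace_conjTranspose_mul_self_of_mul_conjTranspose_eq_one hJ]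
  · have hρ := star_vec_dotProduct_vec_mul_transpose A B (∑ i, u i • C i)
    rw [hvec, ← star_dotProduct_eq_star_dotProduct_sum, hBXA,
      trace_conjTranspose_mul_self_of_mul_conjTranspose_eq_one hJ] at hρ
    rw [show (fun p : Fin m × Fin n => (B * Aᵀ) p.2 p.1) = vec (B * Aᵀ) from rfl, hρ,
      Complex.norm_natCast]
    push_cast
    rw [sq, ← mul_assoc, inv_mul_mul_self]

/-- sharpness of the coefficient `1/min(rk AA*, rk BB*, 𝐫)` for a
rank-one product `⋆` given by `Y_{ij} = v_i v_j*`: with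
`r₀ = min(β, m, n, 𝐫)` there exist `A, B` with `rk AA* = rk BB* = r₀`
(hence `min(rk AA*, rk BB*, 𝐫) = r₀`) and a vector `u` such that
`u*(AA* ⋆ BB*)u = r₀` and `(1/r₀)|ρ* u|² = r₀`. -/
theorem general_prod_sharp (m n N β : ℕ)
    (hm : 1 ≤ m) (hn : 1 ≤ n) (hN : 1 ≤ N) (hβ : 1 ≤ β)
    (v : Fin N → Fin m × Fin n → ℂ) (hv : v ≠ 0)
    (C : Fin N → Matrix (Fin n) (Fin m) ℂ) (hC : ∀ i p q, C i p q = v i (q, p))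
    (rstar : ℕ)
    (hrstar : rstar =
      sSup {t : ℕ | ∃ X ∈ Submodule.span ℂ (Set.range C), Matrix.rank X = t})
    (r₀ : ℕ) (hr₀ : r₀ = min β (min m (min n rstar))) :
    ∃ (A : Matrix (Fin m) (Fin β) ℂ) (B : Matrix (Fin n) (Fin β) ℂ) (u : Fin N → ℂ),
      (A * Aᴴ).rank = r₀ ∧ (B * Bᴴ).rank = r₀ ∧
      min (min (A * Aᴴ).rank (B * Bᴴ).rank) rstar = r₀ ∧
      star u ⬝ᵥ ((Matrix.of fun i j : Fin N =>
          Matrix.trace (((A * Aᴴ) ⊗ₖ (B * Bᴴ)) *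
            (vecMulVec (v i) (star (v j)))ᴴ)).mulVec u) = (r₀ : ℂ) ∧
      ((r₀ : ℂ))⁻¹ *
          ((‖(star fun i : Fin N =>
                star (v i) ⬝ᵥ (fun p : Fin m × Fin n => (B * Aᵀ) p.2 p.1)) ⬝ᵥ u‖ ^ 2 : ℝ) : ℂ)
        = (r₀ : ℂ) :=
  general_prod_sharp_general m n N β v C hC rstar hrstar r₀ hr₀
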